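/- arXiv:2403.00164 — 3 statements merged into one kernel-verified Lean document; each statement's English description precedes it below -/
import Mathlib

section
/- For every k ∈ ℝ and every x ∈ ℝ² with |x| = 2, setting n = x/2, the Hamel velocity field satisfies the Navier slip condition with friction coefficient β = 3/4 and viscosity ν = 1 on the outer circle: [S(u_k)(x) n]_τ + (3/4)(u_k(x))_τ = 0, where S(u_k) = Du_k + Du_kᵀ. (Since the tangential part of −p(x)n vanishes for any scalar p, this is exactly the boundary condition [T(u_k,p)n]_τ + β (u_k)_τ = 0 with T(u,p) = −pI + S(u).) -/
noncomputable section
open MeasureTheory Filter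
open scoped RealInnerProductSpace Topology

/-- The Euclidean plane. -/
abbrev E2 := EuclideanSpace ℝ (Fin 2)

/-- standard basis vector -/
def e2 (i : Fin 2) : E2 := EuclideanSpace.single i 1

/-- divergence of a planar vector field: `div u = ∂₁u₁ + ∂₂u₂` -/
def vdiv (u : E2 → E2) (x : E2) : ℝ := ∑ i, fderiv ℝ u x (e2 i) i

/-- convection term `(u·∇)u`, with i-th component `∑ⱼ uⱼ ∂ⱼuᵢ` -/
def vconv (u : E2 → E2) (x : E2) : E2 := ∑ j, u x j • fderiv ℝ u x (e2 j)

/-- componentwise Laplacian `Δu` -/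
def vlap (u : E2 → E2) (x : E2) : E2 :=
  ∑ j, fderiv ℝ (fun y => fderiv ℝ u y (e2 j)) x (e2 j)

/-- gradient `∇p` of a scalar field, in coordinates -/
def sgrad (p : E2 → ℝ) (x : E2) : E2 := ∑ i, fderiv ℝ p x (e2 i) • e2 i

/-- Laplacian `Δp` of a scalar field -/
def slap (p : E2 → ℝ) (x : E2) : ℝ :=
  ∑ j, fderiv ℝ (fun y => fderiv ℝ p y (e2 j)) x (e2 j)

/-- `x^⊥ = (−x₂, x₁)` -/
def perp (x : E2) : E2 := (-(x 1)) • e2 0 + (x 0) • e2 1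

/-- planar curl `∂₂u₁ − ∂₁u₂` -/
def curl2 (u : E2 → E2) (x : E2) : ℝ :=
  fderiv ℝ u x (e2 1) 0 - fderiv ℝ u x (e2 0) 1

/-- action of the rate-of-strain tensor `S(u)(x) = Du(x) + Du(x)ᵀ` on a vector `n`:
`(Du n) + (Duᵀ n)`, where `(Duᵀ n)ᵢ = ∑ⱼ ∂ᵢuⱼ nⱼ`. -/
def Sapply (u : E2 → E2) (x n : E2) : E2 :=
  fderiv ℝ u x n + ∑ i, (⟪fderiv ℝ u x (e2 i), n⟫) • e2 i

/-- tangential part of `a` relative to a unit vector `n`: `a_τ = a − (a·n)n` -/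
def tang (n a : E2) : E2 := a - ⟪a, n⟫ • n

/-- the Hamel velocity field `u_k(x) = −(3/|x|²)x + k((3|x|−2)/|x|³)x^⊥` -/
def hamel (k : ℝ) (x : E2) : E2 :=
  (-(3 / ‖x‖ ^ 2)) • x + (k * (3 * ‖x‖ - 2) / ‖x‖ ^ 3) • perp x

/-- the open annulus `A = {x : 1 < |x| < 2}` -/
def annulus : Set E2 := {x | 1 < ‖x‖ ∧ ‖x‖ < 2}

/- ### Auxiliary lemmas -/

lemma e2_apply (i j : Fin 2) : e2 i j = if i = j then 1 else 0 := by
  simp [e2, EuclideanSpace.single_apply, eq_comm]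

lemma perp_apply (x : E2) (j : Fin 2) :
    perp x j = if j = 0 then -(x 1) else x 0 := by
  fin_cases j <;> simp [perp, e2_apply]

lemma inner2 (v w : E2) : ⟪v, w⟫ = v 0 * w 0 + v 1 * w 1 := by
  simp [PiLp.inner_apply, Fin.sum_univ_two]; ring

def perpL : E2 →L[ℝ] E2 :=
  LinearMap.toContinuousLinearMap
  { toFun := perp
    map_add' := by
      intro a b; ext j; simp [perp_apply]; split <;> ring
    map_smul' := by
      intro c a; ext j; simp [perp_apply] }

lemma perpL_apply (v : E2) : perpL v = perp v := rfl

lemma basis_sum (v : E2) : (∑ i, (⟪v, e2 i⟫) • e2 i) = v := by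
  ext j
  simp [Fin.sum_univ_two, inner2, e2_apply]
  fin_cases j <;> simp

lemma hasFDerivAt_norm' (x : E2) (hx : x ≠ 0) :
    HasFDerivAt (fun y : E2 => ‖y‖) ((‖x‖⁻¹ : ℝ) • innerSL ℝ x) x := by
  have h2 : (inner ℝ x x : ℝ) ≠ 0 := by
    rw [real_inner_self_eq_norm_sq]; exact pow_ne_zero _ (norm_ne_zero_iff.mpr hx)
  have h1 : HasFDerivAt (fun y : E2 => (inner ℝ y y : ℝ)) ((2:ℝ) • innerSL ℝ x) x := by
    have := (hasFDerivAt_id x).inner ℝ (hasFDerivAt_id x)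
    refine this.congr_fderiv ?_
    ext h
    simp [real_inner_comm]
    ring
  have h3 := HasDerivAt.comp_hasFDerivAt (f := fun y : E2 => (inner ℝ y y : ℝ)) x
    (Real.hasDerivAt_sqrt h2) h1
  have e1 : (fun y : E2 => ‖y‖) = (fun x => √x) ∘ fun y : E2 => (inner ℝ y y : ℝ) := by
    funext y
    show ‖y‖ = Real.sqrt (inner ℝ y y)
    rw [real_inner_self_eq_norm_sq, Real.sqrt_sq (norm_nonneg y)]
  rw [e1]
  refine h3.congr_fderiv ?_
  · ext h
    have hxx : ((fun y : E2 => (inner ℝ y y : ℝ)) x) = ‖x‖^2 := real_inner_self_eq_norm_sq x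
    rw [show (inner ℝ x x : ℝ) = ‖x‖^2 from hxx, Real.sqrt_sq (norm_nonneg x)]
    simp
    ring

set_option synthInstance.maxHeartbeats 1000000

/-- The Fréchet derivative of the Hamel field at a point of norm 2. -/
def hamelD (k : ℝ) (x : E2) : E2 →L[ℝ] E2 :=
  ((3/8 : ℝ)) • (innerSL ℝ x).smulRight x + (-(3/4 : ℝ)) • ContinuousLinearMap.id ℝ E2
  + (-(3*k/16)) • (innerSL ℝ x).smulRight (perp x) + (k/2) • perpL

lemma hamelD_apply (k : ℝ) (x v : E2) :
    hamelD k x v = (3/8 * ⟪x, v⟫) • x + (-(3/4 : ℝ)) • v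
      + (-(3*k/16) * ⟪x, v⟫) • perp x + (k/2) • perp v := by
  simp [hamelD, perpL_apply, smul_smul]

lemma hamel_hasFDerivAt (k : ℝ) (x : E2) (hx : ‖x‖ = 2) :
    HasFDerivAt (hamel k) (hamelD k x) x := by
  have hx0 : x ≠ 0 := by
    intro h; rw [h] at hx; simp at hx
  have hn := hasFDerivAt_norm' x hx0
  have hda : HasDerivAt (fun t : ℝ => -(3 / t ^ 2)) (3/4) 2 := by
    have h := ((hasDerivAt_const (2:ℝ) (3:ℝ)).div (hasDerivAt_pow 2 2) (by norm_num)).neg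
    exact h.congr_deriv (by norm_num)
  have ha : HasFDerivAt (fun y : E2 => -(3 / ‖y‖ ^ 2)) ((3/4 : ℝ) • (‖x‖⁻¹ • innerSL ℝ x)) x :=
    HasDerivAt.comp_hasFDerivAt_of_eq (f := fun y : E2 => ‖y‖) x hda hn hx.symm
  have hdb : HasDerivAt (fun t : ℝ => k * (3 * t - 2) / t ^ 3) (-(3*k/8)) 2 := by
    have h1 : HasDerivAt (fun t : ℝ => k * (3 * t - 2)) (k * 3) 2 := by
      simpa using (((hasDerivAt_id (2:ℝ)).const_mul 3).sub_const 2).const_mul k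
    have h := h1.div (hasDerivAt_pow 3 2) (by norm_num)
    exact h.congr_deriv (by norm_num; ring)
  have hb : HasFDerivAt (fun y : E2 => k * (3 * ‖y‖ - 2) / ‖y‖ ^ 3)
      ((-(3*k/8)) • (‖x‖⁻¹ • innerSL ℝ x)) x :=
    HasDerivAt.comp_hasFDerivAt_of_eq (f := fun y : E2 => ‖y‖) x hdb hn hx.symm
  have hperp : HasFDerivAt perp perpL x := perpL.hasFDerivAt
  have h := (ha.smul (hasFDerivAt_id x)).add (hb.smul hperp)
  have heq : hamel k = fun y : E2 =>
      (-(3 / ‖y‖ ^ 2)) • y + (k * (3 * ‖y‖ - 2) / ‖y‖ ^ 3) • perp y := rfl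
  rw [heq]
  refine h.congr_fderiv ?_
  refine ContinuousLinearMap.ext fun v => ?_
  ext j
  rw [hamelD_apply]
  simp [hx, perpL_apply, PiLp.add_apply, PiLp.smul_apply, inner2]
  ring

/-- On the outer circle `|x| = 2`, with `n = x/2`, the Hamel field satisfies
the Navier slip condition with friction coefficient `β = 3/4` and viscosity `ν = 1`:
`[S(u_k)(x) n]_τ + (3/4)(u_k(x))_τ = 0`. -/
theorem hamel_slip_outer (k : ℝ) (x : E2) (hx : ‖x‖ = 2) :
    tang ((2:ℝ)⁻¹ • x) (Sapply (hamel k) x ((2:ℝ)⁻¹ • x))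
      + (3/4 : ℝ) • tang ((2:ℝ)⁻¹ • x) (hamel k x) = 0 := by
  have hL := hamel_hasFDerivAt k x hx
  have hF : fderiv ℝ (hamel k) x = hamelD k x := hL.fderiv
  have hxx : (⟪x, x⟫ : ℝ) = 4 := by
    rw [real_inner_self_eq_norm_sq, hx]; norm_num
  have h4 : x 0 * x 0 + x 1 * x 1 = 4 := by
    rw [← inner2]; exact hxx
  have hpx : (⟪perp x, x⟫ : ℝ) = 0 := by
    simp [inner2, perp_apply]; ring
  have hxn : (⟪x, (2:ℝ)⁻¹ • x⟫ : ℝ) = 2 := by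
    rw [real_inner_smul_right, hxx]; norm_num
  have hpn : (⟪perp x, (2:ℝ)⁻¹ • x⟫ : ℝ) = 0 := by
    rw [real_inner_smul_right, hpx]; ring
  -- the direct term
  have hdir : hamelD k x ((2:ℝ)⁻¹ • x) = (3/8 : ℝ) • x + (-(k/8)) • perp x := by
    rw [hamelD_apply]
    ext j
    have hps : perp ((2:ℝ)⁻¹ • x) = (2:ℝ)⁻¹ • perp x := by
      rw [← perpL_apply, ← perpL_apply, _root_.map_smul]
    rw [hps]
    fin_cases j <;>
      simp [PiLp.add_apply, PiLp.smul_apply, perp_apply, hxn] <;> ring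
  -- the transpose-sum term
  have pperp : ∀ v w : E2, (⟪perp v, w⟫ : ℝ) = -⟪perp w, v⟫ := by
    intro v w; simp [inner2, perp_apply]; ring
  have hcoef : ∀ i, (⟪hamelD k x (e2 i), (2:ℝ)⁻¹ • x⟫ : ℝ)
      = ⟪(3/8 : ℝ) • x + (-(k/4)) • perp x, e2 i⟫ := by
    intro i
    rw [hamelD_apply]
    simp only [inner_add_left, real_inner_smul_left, real_inner_smul_right, hxx, hpx]
    rw [pperp (e2 i) x, real_inner_comm (e2 i) x]
    ring
  have hsum : (∑ i, (⟪hamelD k x (e2 i), (2:ℝ)⁻¹ • x⟫ : ℝ) • e2 i)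
      = (3/8 : ℝ) • x + (-(k/4)) • perp x := by
    simp_rw [hcoef]
    exact basis_sum _
  have hSA : Sapply (hamel k) x ((2:ℝ)⁻¹ • x)
      = (3/4 : ℝ) • x + (-(3*k/8)) • perp x := by
    rw [Sapply, hF, hdir, hsum]
    module
  have hHV : hamel k x = (-(3/4 : ℝ)) • x + (k/2) • perp x := by
    rw [hamel, hx]
    norm_num
    module
  rw [tang, tang, hSA, hHV]
  have i1 : (⟪(3/4 : ℝ) • x + (-(3*k/8)) • perp x, (2:ℝ)⁻¹ • x⟫ : ℝ) = 3/2 := by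
    rw [inner_add_left, real_inner_smul_left, real_inner_smul_left, hxn, hpn]; ring
  have i2 : (⟪(-(3/4 : ℝ)) • x + (k/2) • perp x, (2:ℝ)⁻¹ • x⟫ : ℝ) = -(3/2) := by
    rw [inner_add_left, real_inner_smul_left, real_inner_smul_left, hxn, hpn]; ring
  rw [i1, i2]
  module
end
end

section
/- The Dirichlet energies of the Hamel solutions blow up: the function k ↦ ∫_A Σ_{i,j=1}^{2} (∂ⱼ(u_k)ᵢ(x))² dx (the squared L²(A)-norm of the gradient of u_k, with respect to two-dimensional Lebesgue measure) tends to +∞ as k → +∞. -/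
noncomputable section
open MeasureTheory Filter
open scoped RealInnerProductSpace Topology

/-! ### Auxiliary material -/

def f0 : E2 → E2 := fun x => (-(3 / ‖x‖ ^ 2)) • x
def g0 : E2 → E2 := fun x => ((3 * ‖x‖ - 2) / ‖x‖ ^ 3) • perp x

lemma contDiff_perp : ContDiff ℝ (⊤ : ℕ∞) perp := by
  have h0 : ContDiff ℝ (⊤ : ℕ∞) (fun x : E2 => x 0) := (EuclideanSpace.proj (0 : Fin 2) : E2 →L[ℝ] ℝ).contDiff
  have h1 : ContDiff ℝ (⊤ : ℕ∞) (fun x : E2 => x 1) := (EuclideanSpace.proj (1 : Fin 2) : E2 →L[ℝ] ℝ).contDiff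
  exact (h1.neg.smul contDiff_const).add (h0.smul contDiff_const)

lemma contDiffAt_f0 {x : E2} (hx : x ≠ 0) : ContDiffAt ℝ (⊤ : ℕ∞) f0 x := by
  have hn : ContDiffAt ℝ (⊤ : ℕ∞) (fun y : E2 => ‖y‖) x := (contDiffAt_id.norm ℝ hx)
  have h2 : ContDiffAt ℝ (⊤ : ℕ∞) (fun y : E2 => ‖y‖ ^ 2) x := hn.pow 2
  have hne : ‖x‖ ^ 2 ≠ 0 := pow_ne_zero _ (norm_ne_zero_iff.mpr hx)
  exact ((contDiffAt_const.div h2 hne).neg.smul contDiffAt_id)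

lemma contDiffAt_g0 {x : E2} (hx : x ≠ 0) : ContDiffAt ℝ (⊤ : ℕ∞) g0 x := by
  have hn : ContDiffAt ℝ (⊤ : ℕ∞) (fun y : E2 => ‖y‖) x := (contDiffAt_id.norm ℝ hx)
  have hne : ‖x‖ ^ 3 ≠ 0 := pow_ne_zero _ (norm_ne_zero_iff.mpr hx)
  exact (((contDiffAt_const.mul hn).sub contDiffAt_const).div (hn.pow 3) hne).smul
    (contDiff_perp.contDiffAt)

lemma hamel_eq (k : ℝ) : hamel k = fun x => f0 x + k • g0 x := by
  funext x
  simp only [hamel, f0, g0, smul_smul, mul_div_assoc]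

lemma fderiv_hamel (k : ℝ) {x : E2} (hx : x ≠ 0) :
    fderiv ℝ (hamel k) x = fderiv ℝ f0 x + k • fderiv ℝ g0 x := by
  have hf := ((contDiffAt_f0 hx).differentiableAt (by simp)).hasFDerivAt
  have hg := ((contDiffAt_g0 hx).differentiableAt (by simp)).hasFDerivAt
  rw [hamel_eq]
  exact (hf.add (hg.const_smul k)).fderiv

def P (x : E2) : ℝ := ∑ i, ∑ j, (fderiv ℝ f0 x (e2 j) i) ^ 2
def Q (x : E2) : ℝ := ∑ i, ∑ j, (fderiv ℝ f0 x (e2 j) i) * (fderiv ℝ g0 x (e2 j) i)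
def R (x : E2) : ℝ := ∑ i, ∑ j, (fderiv ℝ g0 x (e2 j) i) ^ 2

lemma integrand_eq (k : ℝ) {x : E2} (hx : x ≠ 0) :
    ∑ i, ∑ j, (fderiv ℝ (hamel k) x (e2 j) i) ^ 2 = P x + 2 * k * Q x + k ^ 2 * R x := by
  have h : ∀ i j : Fin 2, (fderiv ℝ (hamel k) x (e2 j) i) ^ 2 =
      (fderiv ℝ f0 x (e2 j) i) ^ 2
      + 2 * k * ((fderiv ℝ f0 x (e2 j) i) * (fderiv ℝ g0 x (e2 j) i))
      + k ^ 2 * (fderiv ℝ g0 x (e2 j) i) ^ 2 := by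
    intro i j
    rw [fderiv_hamel k hx]
    simp only [ContinuousLinearMap.add_apply, ContinuousLinearMap.coe_smul',
      Pi.smul_apply, PiLp.add_apply, PiLp.smul_apply, smul_eq_mul]
    ring
  simp only [P, Q, R, Finset.mul_sum]
  rw [← Finset.sum_add_distrib, ← Finset.sum_add_distrib]
  refine Finset.sum_congr rfl fun i _ => ?_
  rw [← Finset.sum_add_distrib, ← Finset.sum_add_distrib]
  exact Finset.sum_congr rfl fun j _ => h i j

lemma continuousAt_entry_f0 {x : E2} (hx : x ≠ 0) (i j : Fin 2) :
    ContinuousAt (fun y => fderiv ℝ f0 y (e2 j) i) x := by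
  have h : ContinuousAt (fderiv ℝ f0) x :=
    ((contDiffAt_f0 hx).fderiv_right (m := 0) (mod_cast le_top)).continuousAt
  have h2 : Continuous (fun A : E2 →L[ℝ] E2 => A (e2 j) i) :=
    ((EuclideanSpace.proj i : E2 →L[ℝ] ℝ).continuous).comp
      ((ContinuousLinearMap.apply ℝ E2 (e2 j)).continuous)
  exact h2.continuousAt.comp h

lemma continuousAt_entry_g0 {x : E2} (hx : x ≠ 0) (i j : Fin 2) :
    ContinuousAt (fun y => fderiv ℝ g0 y (e2 j) i) x := by
  have h : ContinuousAt (fderiv ℝ g0) x :=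
    ((contDiffAt_g0 hx).fderiv_right (m := 0) (mod_cast le_top)).continuousAt
  have h2 : Continuous (fun A : E2 →L[ℝ] E2 => A (e2 j) i) :=
    ((EuclideanSpace.proj i : E2 →L[ℝ] ℝ).continuous).comp
      ((ContinuousLinearMap.apply ℝ E2 (e2 j)).continuous)
  exact h2.continuousAt.comp h

lemma continuousAt_P {x : E2} (hx : x ≠ 0) : ContinuousAt P x := by
  unfold P
  exact tendsto_finset_sum _ fun i _ => tendsto_finset_sum _ fun j _ =>
    (continuousAt_entry_f0 hx i j).pow 2

lemma continuousAt_Q {x : E2} (hx : x ≠ 0) : ContinuousAt Q x := by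
  unfold Q
  exact tendsto_finset_sum _ fun i _ => tendsto_finset_sum _ fun j _ =>
    (continuousAt_entry_f0 hx i j).mul (continuousAt_entry_g0 hx i j)

lemma continuousAt_R {x : E2} (hx : x ≠ 0) : ContinuousAt R x := by
  unfold R
  exact tendsto_finset_sum _ fun i _ => tendsto_finset_sum _ fun j _ =>
    (continuousAt_entry_g0 hx i j).pow 2

lemma closure_annulus_ne_zero : ∀ x ∈ closure annulus, x ≠ 0 := by
  intro x hx
  have h1 : closure annulus ⊆ {y : E2 | 1 ≤ ‖y‖} := by
    apply closure_minimal
    · intro y hy; exact le_of_lt hy.1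
    · exact isClosed_le continuous_const continuous_norm
  intro h0
  have := h1 hx
  simp [h0] at this
  linarith

lemma isCompact_closure_annulus : IsCompact (closure annulus) := by
  have hb : annulus ⊆ Metric.closedBall (0 : E2) 2 := by
    intro y hy
    simpa [Metric.mem_closedBall, dist_eq_norm] using le_of_lt hy.2
  exact (isCompact_closedBall (0 : E2) 2).of_isClosed_subset isClosed_closure
    (closure_minimal hb Metric.isClosed_closedBall)

lemma isOpen_annulus : IsOpen annulus := by
  have h1 : IsOpen {x : E2 | 1 < ‖x‖} := isOpen_lt continuous_const continuous_norm
  have h2 : IsOpen {x : E2 | ‖x‖ < 2} := isOpen_lt continuous_norm continuous_const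
  exact h1.inter h2

lemma measurableSet_annulus : MeasurableSet annulus := isOpen_annulus.measurableSet

lemma integrableOn_of_continuousAt {f : E2 → ℝ}
    (hf : ∀ x ∈ closure annulus, ContinuousAt f x) : IntegrableOn f annulus := by
  have hc : ContinuousOn f (closure annulus) := fun x hx => (hf x hx).continuousWithinAt
  exact (hc.integrableOn_compact isCompact_closure_annulus).mono_set subset_closure

lemma integrableOn_P : IntegrableOn P annulus :=
  integrableOn_of_continuousAt fun x hx => continuousAt_P (closure_annulus_ne_zero x hx)
lemma integrableOn_Q : IntegrableOn Q annulus :=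
  integrableOn_of_continuousAt fun x hx => continuousAt_Q (closure_annulus_ne_zero x hx)
lemma integrableOn_R : IntegrableOn R annulus :=
  integrableOn_of_continuousAt fun x hx => continuousAt_R (closure_annulus_ne_zero x hx)

def x0 : E2 := (3/2 : ℝ) • e2 0

lemma norm_e2 (i : Fin 2) : ‖e2 i‖ = 1 := by
  simp [e2, EuclideanSpace.norm_single]

lemma norm_x0 : ‖x0‖ = 3/2 := by
  rw [x0, norm_smul, norm_e2]
  norm_num

lemma x0_mem : x0 ∈ annulus := by
  constructor <;> rw [norm_x0] <;> norm_num

lemma x0_ne : x0 ≠ 0 := by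
  intro h; have := norm_x0; rw [h, norm_zero] at this; norm_num at this

lemma g0_on_ray {t : ℝ} (ht : 0 < t) : g0 (t • e2 0) 1 = (3 * t - 2) / t ^ 2 := by
  have hnorm : ‖t • e2 0‖ = t := by
    rw [norm_smul, norm_e2, Real.norm_eq_abs, abs_of_pos ht, mul_one]
  have hc : (t • e2 0 : E2) 0 = t := by
    simp [e2, PiLp.smul_apply, EuclideanSpace.single_apply]
  have hc1 : (t • e2 0 : E2) 1 = 0 := by
    simp [e2, PiLp.smul_apply, EuclideanSpace.single_apply]
  have hperp : perp (t • e2 0) 1 = t := by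
    simp [perp, hc, hc1, PiLp.add_apply, PiLp.smul_apply, e2, EuclideanSpace.single_apply]
  rw [g0]
  simp only [PiLp.smul_apply, hperp, hnorm, smul_eq_mul]
  field_simp

lemma fderiv_g0_entry : fderiv ℝ g0 x0 (e2 0) 1 = -4/27 := by
  have hg := ((contDiffAt_g0 x0_ne).differentiableAt (by simp)).hasFDerivAt
  have hc : HasDerivAt (fun t : ℝ => t • e2 0) (e2 0) (3/2) := by
    simpa using (hasDerivAt_id (3/2 : ℝ)).smul_const (e2 0)
  have hcomp : HasDerivAt (fun t : ℝ => g0 (t • e2 0)) (fderiv ℝ g0 x0 (e2 0)) (3/2) := by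
    have := hg.comp_hasDerivAt (3/2 : ℝ) hc
    exact this
  have hcomp1 : HasDerivAt (fun t : ℝ => g0 (t • e2 0) 1) (fderiv ℝ g0 x0 (e2 0) 1) (3/2) := by
    have hproj := (EuclideanSpace.proj (1 : Fin 2) : E2 →L[ℝ] ℝ).hasFDerivAt.comp_hasDerivAt
      (3/2 : ℝ) hcomp
    exact hproj
  have hs : HasDerivAt (fun t : ℝ => (3 * t - 2) / t ^ 2) (-4/27 : ℝ) (3/2) := by
    have hnum : HasDerivAt (fun t : ℝ => 3 * t - 2) 3 (3/2) := by
      simpa using ((hasDerivAt_id (3/2:ℝ)).const_mul 3).sub_const 2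
    have hden : HasDerivAt (fun t : ℝ => t ^ 2) (2 * (3/2)) (3/2) := by
      simpa using (hasDerivAt_pow 2 (3/2:ℝ))
    have := hnum.div hden (by norm_num : ((3/2:ℝ) ^ 2) ≠ 0)
    exact this.congr_deriv (by norm_num)
  have heq : (fun t : ℝ => g0 (t • e2 0) 1) =ᶠ[𝓝 (3/2 : ℝ)] fun t => (3 * t - 2) / t ^ 2 := by
    filter_upwards [Ioi_mem_nhds (by norm_num : (0:ℝ) < 3/2)] with t ht
    exact g0_on_ray ht
  have hs' : HasDerivAt (fun t : ℝ => g0 (t • e2 0) 1) (-4/27 : ℝ) (3/2) :=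
    hs.congr_of_eventuallyEq heq
  exact hcomp1.unique hs'

lemma R_x0_pos : (16/729 : ℝ) ≤ R x0 := by
  have h : (fderiv ℝ g0 x0 (e2 0) 1) ^ 2 = 16/729 := by
    rw [fderiv_g0_entry]; norm_num
  have hR : R x0 = (fderiv ℝ g0 x0 (e2 0) 0) ^ 2 + (fderiv ℝ g0 x0 (e2 1) 0) ^ 2
      + ((fderiv ℝ g0 x0 (e2 0) 1) ^ 2 + (fderiv ℝ g0 x0 (e2 1) 1) ^ 2) := by
    simp [R, Fin.sum_univ_two]
  nlinarith [sq_nonneg (fderiv ℝ g0 x0 (e2 0) 0), sq_nonneg (fderiv ℝ g0 x0 (e2 1) 0),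
    sq_nonneg (fderiv ℝ g0 x0 (e2 1) 1)]

lemma R_nonneg (x : E2) : 0 ≤ R x :=
  Finset.sum_nonneg fun i _ => Finset.sum_nonneg fun j _ => sq_nonneg _

lemma integral_R_pos : 0 < ∫ x in annulus, R x := by
  set V : Set E2 := annulus ∩ R ⁻¹' (Set.Ioi (8/729 : ℝ)) with hV
  have hRcont : ContinuousOn R annulus := fun x hx =>
    (continuousAt_R (fun h0 => by rw [h0] at hx; simp [annulus] at hx; linarith)).continuousWithinAt
  have hVopen : IsOpen V := hRcont.isOpen_inter_preimage isOpen_annulus isOpen_Ioi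
  have hx0V : x0 ∈ V := by
    refine ⟨x0_mem, ?_⟩
    have := R_x0_pos
    simp only [Set.mem_preimage, Set.mem_Ioi]
    linarith
  have hVsub : V ⊆ annulus := Set.inter_subset_left
  have hVmeas : MeasurableSet V := hVopen.measurableSet
  have hVfin : volume V ≠ ⊤ := by
    have hsub : V ⊆ Metric.closedBall (0 : E2) 2 := fun y hy => by
      have := (hVsub hy).2
      simpa [Metric.mem_closedBall, dist_eq_norm] using le_of_lt this
    exact ne_top_of_le_ne_top measure_closedBall_lt_top.ne (measure_mono hsub)
  have hVpos : 0 < (volume V).toReal :=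
    ENNReal.toReal_pos (hVopen.measure_pos volume ⟨x0, hx0V⟩).ne' hVfin
  have h1 : (8/729 : ℝ) * (volume V).toReal ≤ ∫ x in V, R x :=
    setIntegral_ge_of_const_le_real hVmeas hVfin (fun x hx => le_of_lt hx.2)
      (integrableOn_R.mono_set hVsub)
  have h2 : ∫ x in V, R x ≤ ∫ x in annulus, R x := by
    apply setIntegral_mono_set integrableOn_R
    · exact Filter.Eventually.of_forall fun x => R_nonneg x
    · exact HasSubset.Subset.eventuallyLE hVsub
  have : 0 < (8/729 : ℝ) * (volume V).toReal := by positivity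
  linarith

/-- The Dirichlet energies of the Hamel solutions blow up:
`∫_A Σᵢⱼ (∂ⱼ(u_k)ᵢ)² dx → +∞` as `k → +∞`. -/
theorem hamel_energy_blowup :
    Tendsto (fun k : ℝ =>
        ∫ x in annulus, ∑ i, ∑ j, (fderiv ℝ (hamel k) x (e2 j) i) ^ 2)
      atTop atTop := by
  set a := ∫ x in annulus, P x with ha
  set b := ∫ x in annulus, Q x with hb
  set c := ∫ x in annulus, R x with hc
  have hcpos : 0 < c := integral_R_pos
  have key : ∀ k : ℝ, (∫ x in annulus, ∑ i, ∑ j, (fderiv ℝ (hamel k) x (e2 j) i) ^ 2)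
      = a + 2 * k * b + k ^ 2 * c := by
    intro k
    have hxne : ∀ x ∈ annulus, x ≠ (0 : E2) := by
      intro x hx h0
      rw [h0] at hx
      simp [annulus] at hx
      linarith
    rw [setIntegral_congr_fun measurableSet_annulus
      (fun x hx => integrand_eq k (hxne x hx))]
    have e1 : (∫ x in annulus, (P x + 2 * k * Q x + k ^ 2 * R x))
        = (∫ x in annulus, (P x + 2 * k * Q x)) + ∫ x in annulus, k ^ 2 * R x :=
      integral_add (integrableOn_P.add (integrableOn_Q.const_mul (2 * k)))
        (integrableOn_R.const_mul (k ^ 2))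
    have e2' : (∫ x in annulus, (P x + 2 * k * Q x))
        = (∫ x in annulus, P x) + ∫ x in annulus, 2 * k * Q x :=
      integral_add integrableOn_P (integrableOn_Q.const_mul (2 * k))
    rw [e1, e2', MeasureTheory.integral_const_mul, MeasureTheory.integral_const_mul]
  have hpoly : Tendsto (fun k : ℝ => k * (k * c + 2 * b) + a) atTop atTop := by
    apply tendsto_atTop_add_const_right
    exact tendsto_id.atTop_mul_atTop₀
      (tendsto_atTop_add_const_right _ _ (tendsto_id.atTop_mul_const hcpos))
  have hfun : (fun k : ℝ => a + 2 * k * b + k ^ 2 * c)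
      = fun k : ℝ => k * (k * c + 2 * b) + a := by
    funext k; ring
  rw [show (fun k : ℝ =>
      ∫ x in annulus, ∑ i, ∑ j, (fderiv ℝ (hamel k) x (e2 j) i) ^ 2)
      = fun k : ℝ => a + 2 * k * b + k ^ 2 * c from funext key, hfun]
  exact hpoly
end
end

section
/- Relation between the tangential stress and the vorticity on a circle (the identity [S(u)n]_τ = curl u (n₂,−n₁)ᵀ + 2∇_τ(u·n) + 2Wᵀu specialized to a circular boundary, where the Weingarten map of the circle |x| = R with outward normal n = x/R equals W = −(I − n⊗n)/R and ∇_τ(u·n) = 0): let R > 0, let U ⊆ ℝ² be an open set containing the circle C_R = {x ∈ ℝ² : |x| = R}, and let u : U → ℝ² be differentiable with u(x)·x = 0 for every x ∈ C_R. Then for every x ∈ C_R, writing n = x/R = (n₁,n₂) and S(u) = Du + Duᵀ, the tangential part of S(u)(x)n satisfies [S(u)(x) n]_τ = (∂₂u₁ − ∂₁u₂)(x) · (n₂, −n₁) − (2/R) u(x). -/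
noncomputable section
open MeasureTheory Filter
open scoped RealInnerProductSpace Topology

/-- Tangential stress/vorticity relation on a circle: if `u` is differentiable
on an open set `U ⊇ C_R = {|x| = R}` and tangent to `C_R` (`u(x)·x = 0` there), then for every
`x ∈ C_R`, with `n = x/R`, `[S(u)(x) n]_τ = (∂₂u₁ − ∂₁u₂)(x)·(n₂, −n₁) − (2/R) u(x)`. -/
theorem tangential_stress_on_circle
    (R : ℝ) (hR : 0 < R) (U : Set E2) (hU : IsOpen U)
    (hC : {x : E2 | ‖x‖ = R} ⊆ U)
    (u : E2 → E2) (hu : ∀ x ∈ U, DifferentiableAt ℝ u x)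
    (htan : ∀ x : E2, ‖x‖ = R → ⟪u x, x⟫ = 0) :
    ∀ x : E2, ‖x‖ = R →
      tang (R⁻¹ • x) (Sapply u x (R⁻¹ • x))
        = curl2 u x • ((R⁻¹ * x 1) • e2 0 + (-(R⁻¹ * x 0)) • e2 1)
          - (2/R) • u x := by
  intro x hx
  have hxU : x ∈ U := hC hx
  have hdiff : DifferentiableAt ℝ u x := hu x hxU
  have hR0 : R ≠ 0 := hR.ne'
  have he : ∀ i j : Fin 2, e2 i j = if j = i then (1 : ℝ) else 0 := fun i j => by
    simp [e2, EuclideanSpace.single_apply]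
  have hx2 : x 0 ^ 2 + x 1 ^ 2 = R ^ 2 := by
    have h := real_inner_self_eq_norm_sq x
    rw [hx] at h
    simp only [PiLp.inner_apply, RCLike.inner_apply, conj_trivial, Fin.sum_univ_two] at h
    nlinarith [h]
  have H2 : u x 0 * x 0 + u x 1 * x 1 = 0 := by
    have h := htan x hx
    simp [PiLp.inner_apply, RCLike.inner_apply, conj_trivial, Fin.sum_univ_two] at h
    linear_combination h
  -- the key constraint from differentiating ⟪u, x⟫ = 0 along the circle
  have hkey : ⟪u x, perp x⟫ + ⟪(fderiv ℝ u x) (perp x), x⟫ = 0 := by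
    set γ : ℝ → E2 := fun θ => Real.cos θ • x + Real.sin θ • perp x with hγdef
    have hγ0 : γ 0 = x := by simp [hγdef]
    have hnorm : ∀ θ, ‖γ θ‖ = R := by
      intro θ
      have h1 : ⟪γ θ, γ θ⟫ = R ^ 2 := by
        simp only [hγdef, perp, PiLp.inner_apply, RCLike.inner_apply, conj_trivial,
          Fin.sum_univ_two, PiLp.add_apply, PiLp.smul_apply, he, smul_eq_mul]
        norm_num
        nlinarith [Real.sin_sq_add_cos_sq θ, hx2]
      have h2 : ‖γ θ‖ ^ 2 = R ^ 2 := by rw [← real_inner_self_eq_norm_sq]; exact h1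
      calc ‖γ θ‖ = Real.sqrt (‖γ θ‖ ^ 2) := (Real.sqrt_sq (norm_nonneg _)).symm
        _ = Real.sqrt (R ^ 2) := by rw [h2]
        _ = R := Real.sqrt_sq hR.le
    have hγ' : HasDerivAt γ (perp x) 0 := by
      have h1 : HasDerivAt (fun θ : ℝ => Real.cos θ • x) ((-Real.sin 0) • x) 0 :=
        (Real.hasDerivAt_cos 0).smul_const x
      have h2 : HasDerivAt (fun θ : ℝ => Real.sin θ • perp x) (Real.cos 0 • perp x) 0 :=
        (Real.hasDerivAt_sin 0).smul_const (perp x)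
      have h3 := h1.add h2
      have h4 : HasDerivAt γ ((-Real.sin 0) • x + Real.cos 0 • perp x) 0 := h3
      simpa using h4
    have hF : HasFDerivAt (fun y => ⟪u y, y⟫)
        ((fderivInnerCLM ℝ (u (γ 0), γ 0)).comp
          ((fderiv ℝ u (γ 0)).prod (ContinuousLinearMap.id ℝ E2))) (γ 0) := by
      rw [hγ0]
      exact (hdiff.hasFDerivAt).inner ℝ (hasFDerivAt_id x)
    have hcomp := hF.comp_hasDerivAt 0 hγ'
    have hzero : (fun y => ⟪u y, y⟫) ∘ γ = fun _ : ℝ => (0 : ℝ) := by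
      funext θ; exact htan (γ θ) (hnorm θ)
    rw [hzero] at hcomp
    have huniq := hcomp.unique (hasDerivAt_const 0 0)
    rw [hγ0] at huniq
    simpa [fderivInnerCLM_apply] using huniq
  -- expand the derivative terms in coordinates
  have hxdecomp : x = x 0 • e2 0 + x 1 • e2 1 := by
    ext i
    fin_cases i <;> simp [he, PiLp.add_apply, PiLp.smul_apply]
  have hAperp : (fderiv ℝ u x) (perp x)
      = (-(x 1)) • (fderiv ℝ u x) (e2 0) + (x 0) • (fderiv ℝ u x) (e2 1) := by
    rw [perp, map_add, (fderiv ℝ u x).map_smul, (fderiv ℝ u x).map_smul]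
  have hAn : (fderiv ℝ u x) (R⁻¹ • x)
      = (R⁻¹ * x 0) • (fderiv ℝ u x) (e2 0) + (R⁻¹ * x 1) • (fderiv ℝ u x) (e2 1) := by
    have hn : (R⁻¹ • x : E2) = (R⁻¹ * x 0) • e2 0 + (R⁻¹ * x 1) • e2 1 := by
      ext i
      fin_cases i <;> simp [he, PiLp.add_apply, PiLp.smul_apply]
    rw [hn, map_add, (fderiv ℝ u x).map_smul, (fderiv ℝ u x).map_smul]
  have H3 : -(u x 0 * x 1) + u x 1 * x 0 +
      ((-(x 1 * fderiv ℝ u x (e2 0) 0) + x 0 * fderiv ℝ u x (e2 1) 0) * x 0 +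
        (-(x 1 * fderiv ℝ u x (e2 0) 1) + x 0 * fderiv ℝ u x (e2 1) 1) * x 1) = 0 := by
    have h := hkey
    rw [hAperp] at h
    simp only [perp, PiLp.inner_apply, RCLike.inner_apply, conj_trivial, Fin.sum_univ_two,
      PiLp.add_apply, PiLp.smul_apply, he, smul_eq_mul] at h
    norm_num at h
    linarith [h]
  have hs : R * R⁻¹ = 1 := mul_inv_cancel₀ hR0
  -- finish componentwise
  ext i
  fin_cases i <;>
    simp only [tang, Sapply, curl2, hAn, PiLp.inner_apply, RCLike.inner_apply, conj_trivial,
      Fin.sum_univ_two, PiLp.add_apply, PiLp.sub_apply, PiLp.smul_apply, he,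
      smul_eq_mul, div_eq_mul_inv, Fin.zero_eta, Fin.mk_one] <;>
    norm_num
  · linear_combination
      (-(R⁻¹^3*(2*(fderiv ℝ u x (e2 0) 0)*(x 0) + 2*(fderiv ℝ u x (e2 0) 1)*(x 1) + 2*(u x 0)))) * hx2
      + (2*R⁻¹^3*(x 0)) * H2
      + (-(2*R⁻¹^3*(x 1))) * H3
      + (-(R⁻¹*(1+R⁻¹*R)*(2*(fderiv ℝ u x (e2 0) 0)*(x 0) + 2*(fderiv ℝ u x (e2 0) 1)*(x 1) + 2*(u x 0)))) * hs
  · linear_combination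
      (-(R⁻¹^3*(2*(fderiv ℝ u x (e2 1) 0)*(x 0) + 2*(fderiv ℝ u x (e2 1) 1)*(x 1) + 2*(u x 1)))) * hx2
      + (2*R⁻¹^3*(x 1)) * H2
      + (2*R⁻¹^3*(x 0)) * H3
      + (-(R⁻¹*(1+R⁻¹*R)*(2*(fderiv ℝ u x (e2 1) 0)*(x 0) + 2*(fderiv ℝ u x (e2 1) 1)*(x 1) + 2*(u x 1)))) * hs
end
end
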